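/- Let (O, μ) be a multiplicative non-symmetric operad with δ_μ(f) = [μ,f]. Then δ_μ is a graded derivation of the cup product: δ_μ(f ⌣ g) = δ_μ(f) ⌣ g + (-1)^m f ⌣ δ_μ(g) for f ∈ O^m, g ∈ O^n. -/

import Mathlib

open Finset

/-- A non-symmetric unital operad in `k`-modules, presented with an ambient module `A`
whose graded pieces `piece n` play the role of `O^n`, partial compositions
`comp f g i` (denoted `f ∘ᵢ g`, declared to vanish for out-of-range data), and a unit. -/
structure NSOperad (k A : Type) [CommRing k] [AddCommGroup A] [Module k A] where
  piece : ℕ → Submodule k A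
  comp : A → A → ℕ → A
  one : A
  one_mem : one ∈ piece 1
  comp_mem : ∀ {n m : ℕ} {f g : A}, f ∈ piece n → g ∈ piece m → ∀ i : ℕ,
      comp f g i ∈ piece (n + m - 1)
  comp_add_left : ∀ (f f' g : A) (i : ℕ), comp (f + f') g i = comp f g i + comp f' g i
  comp_add_right : ∀ (f g g' : A) (i : ℕ), comp f (g + g') i = comp f g i + comp f g' i
  comp_smul_left : ∀ (c : k) (f g : A) (i : ℕ), comp (c • f) g i = c • comp f g i
  comp_smul_right : ∀ (c : k) (f g : A) (i : ℕ), comp f (c • g) i = c • comp f g i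
  comp_out_of_range : ∀ {n : ℕ} {f : A}, f ∈ piece n → ∀ (g : A) (i : ℕ),
      (n < i ∨ n = 0) → comp f g i = 0
  assoc₁ : ∀ {n m p : ℕ} {f g h : A}, f ∈ piece n → g ∈ piece m → h ∈ piece p →
      ∀ i j : ℕ, 1 ≤ j → j < i → i ≤ n →
      comp (comp f g i) h j = comp (comp f h j) g (i + p - 1)
  assoc₂ : ∀ {n m p : ℕ} {f g h : A}, f ∈ piece n → g ∈ piece m → h ∈ piece p →
      ∀ i j : ℕ, 1 ≤ i → i ≤ j → j < m + i →
      comp (comp f g i) h j = comp f (comp g h (j - i + 1)) i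
  assoc₃ : ∀ {n m p : ℕ} {f g h : A}, f ∈ piece n → g ∈ piece m → h ∈ piece p →
      ∀ i j : ℕ, 1 ≤ i → m + i ≤ j → j ≤ n + m - 1 →
      comp (comp f g i) h j = comp (comp f h (j - m + 1)) g i
  unit_right : ∀ {n : ℕ} {f : A}, f ∈ piece n → ∀ i : ℕ, 1 ≤ i → i ≤ n → comp f one i = f
  unit_left : ∀ f : A, comp one f 1 = f

variable {k A : Type} [CommRing k] [AddCommGroup A] [Module k A]

/-- The circle product `f ∘ g = ∑_{i=1}^n (-1)^{(i-1)(m-1)} f ∘ᵢ g` for `f ∈ O^n`, `g ∈ O^m`.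
(The sign exponent `(i+1)*(m+1)` has the same parity as `(i-1)(m-1)`.) -/
def NSOperad.circle (O : NSOperad k A) (n m : ℕ) (f g : A) : A :=
  ∑ i ∈ Finset.Icc 1 n, ((-1 : ℤ) ^ ((i + 1) * (m + 1))) • O.comp f g i

/-- The cup product `f ⌣ g = (μ ∘₂ f) ∘₁ g` induced by a multiplication `μ ∈ O^2`. -/
def NSOperad.cup (O : NSOperad k A) (μ f g : A) : A :=
  O.comp (O.comp μ f 2) g 1

/-- The operator `δ_μ f = [μ, f] = μ ∘ f - (-1)^{m-1} f ∘ μ` for `f ∈ O^m`. -/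
def NSOperad.dmu (O : NSOperad k A) (μ : A) (m : ℕ) (f : A) : A :=
  O.circle 2 m μ f - ((-1 : ℤ) ^ (m + 1)) • O.circle m 2 f μ

/-!
Since `f ⌣ g = (μ ∘₂ f) ∘₁ g`, the associativity axioms of the operad together with
`μ ∘₁ μ = μ ∘₂ μ` push every partial composition with `f ⌣ g` onto one of the factors:
`μ ∘₁ (f ⌣ g) = (μ ∘₁ f) ⌣ g`, `μ ∘₂ (f ⌣ g) = f ⌣ (μ ∘₂ g)`, and `(f ⌣ g) ∘ⱼ h` is
`f ⌣ (g ∘ⱼ h)` for `j ≤ n` and `(f ∘_{j-n} h) ⌣ g` for `j > n`, so that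
`(f ⌣ g) ∘ h = f ⌣ (g ∘ h) ± (f ∘ h) ⌣ g`. Expanding both sides of the Leibniz rule, all terms
match except `±(μ ∘₂ f) ⌣ g` and `∓f ⌣ (μ ∘₁ g)`, which cancel because
`f ⌣ (μ ∘₁ g) = (μ ∘₂ f) ⌣ g`.
-/

namespace NSOperad

variable (O : NSOperad k A)

def compₗ (i : ℕ) : A →ₗ[k] A →ₗ[k] A :=
  LinearMap.mk₂ k (O.comp · · i) (O.comp_add_left · · · i) (O.comp_smul_left · · · i)
    (O.comp_add_right · · · i) (O.comp_smul_right · · · i)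

def cupₗ (μ : A) : A →ₗ[k] A →ₗ[k] A :=
  (O.compₗ 1).comp (O.compₗ 2 μ)

variable {O} {μ : A}

theorem cupₗ_apply (f g : A) : O.cupₗ μ f g = O.cup μ f g := rfl

theorem cup_add_left (f f' g : A) : O.cup μ (f + f') g = O.cup μ f g + O.cup μ f' g :=
  (O.cupₗ μ).map_add₂ f f' g

theorem cup_add_right (f g g' : A) : O.cup μ f (g + g') = O.cup μ f g + O.cup μ f g' :=
  map_add (O.cupₗ μ f) g g'

theorem cup_sub_left (f f' g : A) : O.cup μ (f - f') g = O.cup μ f g - O.cup μ f' g :=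
  (O.cupₗ μ).map_sub₂ f f' g

theorem cup_sub_right (f g g' : A) : O.cup μ f (g - g') = O.cup μ f g - O.cup μ f g' :=
  map_sub (O.cupₗ μ f) g g'

theorem cup_zsmul_left (c : ℤ) (f g : A) : O.cup μ (c • f) g = c • O.cup μ f g := by
  rw [← cupₗ_apply, map_zsmul, LinearMap.smul_apply, cupₗ_apply]

theorem cup_zsmul_right (c : ℤ) (f g : A) : O.cup μ f (c • g) = c • O.cup μ f g :=
  map_zsmul (O.cupₗ μ f) c g

theorem cup_sum_left {ι : Type*} (s : Finset ι) (f : ι → A) (g : A) :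
    O.cup μ (∑ i ∈ s, f i) g = ∑ i ∈ s, O.cup μ (f i) g :=
  (O.cupₗ μ).map_sum₂ s f g

theorem cup_sum_right {ι : Type*} (s : Finset ι) (f : A) (g : ι → A) :
    O.cup μ f (∑ i ∈ s, g i) = ∑ i ∈ s, O.cup μ f (g i) :=
  map_sum (O.cupₗ μ f) g s

theorem circle_eq_sum_range (n q : ℕ) (f g : A) :
    O.circle n q f g = ∑ j ∈ range n, ((-1 : ℤ) ^ (j * (q + 1))) • O.comp f g (j + 1) := by
  rw [circle, ← Ico_add_one_right_eq_Icc, sum_Ico_eq_sum_range, Nat.add_sub_cancel]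
  refine sum_congr rfl fun j _ => ?_
  rw [add_comm 1 j, show (j + 1 + 1) * (q + 1) = j * (q + 1) + 2 * (q + 1) by ring, pow_add,
    (even_two_mul _).neg_one_pow, mul_one]

theorem circle_two (q : ℕ) (f g : A) :
    O.circle 2 q f g = O.comp f g 1 + ((-1 : ℤ) ^ (q + 1)) • O.comp f g 2 := by
  simp [circle_eq_sum_range, sum_range_succ]

section Multiplication

variable {m n p : ℕ} {f g h : A}

theorem comp_two_mem (hμ : μ ∈ O.piece 2) (hf : f ∈ O.piece m) :
    O.comp μ f 2 ∈ O.piece (m + 1) := by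
  simpa [add_comm] using O.comp_mem hμ hf 2

theorem comp_one_comp_two_swap (hμ : μ ∈ O.piece 2) (hmul : O.comp μ μ 1 = O.comp μ μ 2)
    (hf : f ∈ O.piece m) : O.comp μ (O.comp μ f 2) 1 = O.comp μ (O.comp μ f 1) 2 := by
  have h₁ := O.assoc₂ hμ hμ hf 1 2 le_rfl one_le_two (by norm_num)
  have h₂ := O.assoc₂ hμ hμ hf 2 2 one_le_two le_rfl (by norm_num)
  norm_num at h₁ h₂
  rw [← h₁, hmul, h₂]

theorem comp_two_comp_one_self (hμ : μ ∈ O.piece 2) (hmul : O.comp μ μ 1 = O.comp μ μ 2)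
    (hf : f ∈ O.piece m) : O.comp (O.comp μ f 2) μ 1 = O.comp μ (O.comp μ f 2) 2 := by
  have h₁ := O.assoc₁ hμ hf hμ 2 1 le_rfl one_lt_two le_rfl
  have h₂ := O.assoc₂ hμ hμ hf 2 3 one_le_two (by norm_num) (by norm_num)
  norm_num at h₁ h₂
  rw [h₁, hmul, h₂]

theorem cup_comp_of_le (hμ : μ ∈ O.piece 2) (hf : f ∈ O.piece m) (hg : g ∈ O.piece n)
    (hh : h ∈ O.piece p) {j : ℕ} (hj₁ : 1 ≤ j) (hjn : j ≤ n) :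
    O.comp (O.cup μ f g) h j = O.cup μ f (O.comp g h j) := by
  have := O.assoc₂ (comp_two_mem hμ hf) hg hh 1 j le_rfl hj₁ (by omega)
  rwa [Nat.sub_add_cancel hj₁] at this

theorem cup_comp_add (hμ : μ ∈ O.piece 2) (hf : f ∈ O.piece m) (hg : g ∈ O.piece n)
    (hh : h ∈ O.piece p) {i : ℕ} (hi₁ : 1 ≤ i) (him : i ≤ m) :
    O.comp (O.cup μ f g) h (n + i) = O.cup μ (O.comp f h i) g := by
  have h₁ := O.assoc₃ (comp_two_mem hμ hf) hg hh 1 (n + i) le_rfl (by omega) (by omega)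
  have h₂ := O.assoc₂ hμ hf hh 2 (i + 1) one_le_two (by omega) (by omega)
  rw [show n + i - n + 1 = i + 1 by omega] at h₁
  rw [show i + 1 - 2 + 1 = i by omega] at h₂
  rw [cup, h₁, h₂, cup]

theorem comp_one_cup (hμ : μ ∈ O.piece 2) (hmul : O.comp μ μ 1 = O.comp μ μ 2)
    (hf : f ∈ O.piece m) (hg : g ∈ O.piece n) :
    O.comp μ (O.cup μ f g) 1 = O.cup μ (O.comp μ f 1) g := by
  have := O.assoc₂ hμ (comp_two_mem hμ hf) hg 1 1 le_rfl le_rfl (by omega)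
  rw [cup, cup, ← comp_one_comp_two_swap hμ hmul hf, ← this]

theorem comp_two_cup (hμ : μ ∈ O.piece 2) (hmul : O.comp μ μ 1 = O.comp μ μ 2)
    (hf : f ∈ O.piece m) (hg : g ∈ O.piece n) :
    O.comp μ (O.cup μ f g) 2 = O.cup μ f (O.comp μ g 2) := by
  have h₁ := O.assoc₂ hμ (comp_two_mem hμ hf) hg 2 2 one_le_two le_rfl (by omega)
  have h₂ := O.assoc₂ (comp_two_mem hμ hf) hμ hg 1 2 le_rfl one_le_two (by omega)
  norm_num at h₁ h₂
  rw [cup, cup, ← h₁, ← comp_two_comp_one_self hμ hmul hf, h₂]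

theorem cup_comp_one (hμ : μ ∈ O.piece 2) (hmul : O.comp μ μ 1 = O.comp μ μ 2)
    (hf : f ∈ O.piece m) (hg : g ∈ O.piece n) :
    O.cup μ f (O.comp μ g 1) = O.cup μ (O.comp μ f 2) g := by
  have := O.assoc₂ (comp_two_mem hμ hf) hμ hg 1 1 le_rfl le_rfl (by omega)
  rw [cup, cup, ← this, comp_two_comp_one_self hμ hmul hf]

theorem circle_cup (hμ : μ ∈ O.piece 2) (hf : f ∈ O.piece m) (hg : g ∈ O.piece n)
    (hh : h ∈ O.piece p) :
    O.circle (m + n) p (O.cup μ f g) h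
      = O.cup μ f (O.circle n p g h)
        + ((-1 : ℤ) ^ (n * (p + 1))) • O.cup μ (O.circle m p f h) g := by
  have inner : ∀ j ∈ range n, ((-1 : ℤ) ^ (j * (p + 1))) • O.comp (O.cup μ f g) h (j + 1)
      = O.cup μ f (((-1 : ℤ) ^ (j * (p + 1))) • O.comp g h (j + 1)) := fun j hj => by
    rw [cup_zsmul_right, cup_comp_of_le hμ hf hg hh (Nat.le_add_left 1 j) (mem_range.1 hj)]
  have outer : ∀ i ∈ range m,
      ((-1 : ℤ) ^ ((n + i) * (p + 1))) • O.comp (O.cup μ f g) h (n + i + 1)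
        = ((-1 : ℤ) ^ (n * (p + 1)))
          • O.cup μ (((-1 : ℤ) ^ (i * (p + 1))) • O.comp f h (i + 1)) g :=
    fun i hi => by
      rw [add_assoc, cup_comp_add hμ hf hg hh (Nat.le_add_left 1 i) (mem_range.1 hi),
        cup_zsmul_left, smul_smul, add_mul, pow_add]
  rw [circle_eq_sum_range, add_comm m n, sum_range_add, sum_congr rfl inner,
    sum_congr rfl outer, ← smul_sum, ← cup_sum_right, ← cup_sum_left, ← circle_eq_sum_range,
    ← circle_eq_sum_range]

end Multiplication

end NSOperad

/-- `δ_μ` is a graded derivation of the cup product: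
`δ_μ(f ⌣ g) = δ_μ(f) ⌣ g + (-1)^m f ⌣ δ_μ(g)` for `f ∈ O^m`, `g ∈ O^n`. -/
theorem dmu_cup_derivation (O : NSOperad k A) {μ : A} (hμ : μ ∈ O.piece 2)
    (hmul : O.comp μ μ 1 = O.comp μ μ 2) {m n : ℕ} {f g : A}
    (hf : f ∈ O.piece m) (hg : g ∈ O.piece n) :
    O.dmu μ (m + n) (O.cup μ f g)
      = O.cup μ (O.dmu μ m f) g + ((-1 : ℤ) ^ m) • O.cup μ f (O.dmu μ n g) := by
  have hsign : (-1 : ℤ) ^ (n * (2 + 1)) = (-1) ^ n := by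
    rw [mul_comm, pow_mul]
    norm_num
  simp only [NSOperad.dmu, NSOperad.circle_two, NSOperad.circle_cup hμ hf hg hμ, hsign,
    NSOperad.comp_one_cup hμ hmul hf hg, NSOperad.comp_two_cup hμ hmul hf hg,
    NSOperad.cup_comp_one hμ hmul hf hg, NSOperad.cup_sub_left, NSOperad.cup_add_left,
    NSOperad.cup_zsmul_left, NSOperad.cup_sub_right, NSOperad.cup_add_right,
    NSOperad.cup_zsmul_right, smul_add, smul_sub, smul_smul, pow_add, pow_one]
  rcases neg_one_pow_eq_or ℤ m with hm | hm <;> rcases neg_one_pow_eq_or ℤ n with hn | hn <;>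
    simp only [hm, hn] <;> module
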